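/- arXiv:0806.3784 — 2 statements merged into one kernel-verified Lean document; each statement's English description precedes it below -/
import Mathlib

section
/- Let g₁,…,gₘ ∈ ℝ[X₁,…,Xₙ], K := {x ∈ ℝⁿ : gⱼ(x) ≥ 0, j = 1,…,m}, and assume Slater's condition holds. Let f ∈ ℝ[X₁,…,Xₙ] attain its infimum f* := inf{f(x) : x ∈ K} at some x* ∈ K. If f is SOS-convex and −gⱼ is SOS-convex for every j = 1,…,m, then there exist an SOS polynomial σ₀ that is convex on ℝⁿ and scalars λ₁,…,λₘ ≥ 0 such that f − f* = σ₀ + Σⱼ λⱼ gⱼ. -/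
open MvPolynomial Matrix

/-- A polynomial is SOS if it is a finite sum of squares of polynomials. -/
def IsSOS {n : ℕ} (p : MvPolynomial (Fin n) ℝ) : Prop :=
  ∃ (k : ℕ) (q : Fin k → MvPolynomial (Fin n) ℝ), p = ∑ i, q i ^ 2

/-- A polynomial `f` is SOS-convex if its Hessian of formal second partial
derivatives factors as `L·Lᵀ` for some polynomial matrix `L`. -/
def IsSOSConvex {n : ℕ} (f : MvPolynomial (Fin n) ℝ) : Prop :=
  ∃ (s : ℕ) (L : Matrix (Fin n) (Fin s) (MvPolynomial (Fin n) ℝ)),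
    (Matrix.of fun i j => pderiv i (pderiv j f)) = L * Lᵀ

/-!
SOS-convexity implies convexity, since the second derivative of `f` along any line is a sum of
squares. Slater's condition and convexity then give Lagrange multipliers `λ ≥ 0` with
`σ₀ := f - f* - ∑ λⱼ gⱼ ≥ 0` on `ℝⁿ`, by separating the open positive orthant from the set of
points below `x ↦ (g(x), f* - f(x))`. This `σ₀` is again SOS-convex and vanishes at `x*`, hence so
does its gradient, and Taylor's formula for `φ(t) := σ₀(x* + t (X - x*))` reads
`σ₀ = φ(1) = ∫₀¹ (1 - t) φ''(t) dt`, where `φ'' = ∑ₖ Qₖ(t)²` because `∇²σ₀ = L Lᵀ`. Finally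
`∫₀¹ (1 - t) Q(t)² dt` is a sum of squares of polynomials in `X`: the moment matrix
`(∫₀¹ (1 - t) t^(k+l) dt)ₖₗ` is positive semidefinite, hence a Gram matrix `BᵀB`.
-/

theorem IsSumSq.map {R S F : Type*} [Semiring R] [Semiring S] [FunLike F R S] [RingHomClass F R S]
    (f : F) {s : R} (hs : IsSumSq s) : IsSumSq (f s) := by
  induction hs with
  | zero => rw [map_zero]; exact .zero
  | sq_add a _ ih => simpa using ih.sq_add (f a)

theorem IsSumSq.isSOS {n : ℕ} {p : MvPolynomial (Fin n) ℝ} (hp : IsSumSq p) : IsSOS p := by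
  induction hp with
  | zero => exact ⟨0, Fin.elim0, by simp⟩
  | sq_add a _ ih =>
    obtain ⟨k, q, rfl⟩ := ih
    exact ⟨k + 1, Fin.cons a q, by simp [Fin.sum_univ_succ, sq]⟩

namespace Polynomial

variable {A : Type*} [CommRing A] [Algebra ℝ A]

/-- The formal integral `∫₀¹ q(t) dt`, taken coefficientwise. -/
noncomputable def unitIntegral : A[X] →ₗ[ℝ] A :=
  lsum fun k => ((k : ℝ) + 1)⁻¹ • LinearMap.id

theorem unitIntegral_monomial (k : ℕ) (a : A) :
    unitIntegral (monomial k a) = ((k : ℝ) + 1)⁻¹ • a := by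
  simp [unitIntegral]

theorem unitIntegral_derivative (q : A[X]) :
    unitIntegral (derivative q) = q.eval 1 - q.eval 0 := by
  induction q using Polynomial.induction_on' with
  | add p q hp hq => simp only [map_add, hp, hq, eval_add]; abel
  | monomial k a =>
    cases k with
    | zero => simp
    | succ k =>
      rw [derivative_monomial, unitIntegral_monomial, ← nsmul_eq_mul', ← Nat.cast_smul_eq_nsmul ℝ,
        smul_smul]
      simp [Nat.cast_add_one_ne_zero]

theorem unitIntegral_one_sub_X_mul_derivative_derivative (q : A[X]) :
    unitIntegral ((1 - X) * derivative (derivative q)) =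
      q.eval 1 - q.eval 0 - (derivative q).eval 0 := by
  have h : (1 - X) * derivative (derivative q) =
      derivative ((1 - X) * derivative q) + derivative q := by
    simp only [derivative_mul, derivative_sub, derivative_one, derivative_X]
    ring
  rw [h, map_add, unitIntegral_derivative, unitIntegral_derivative]
  simp only [eval_mul, eval_sub, eval_one, eval_X, sub_self, zero_mul, sub_zero, one_mul, zero_sub]
  ring

/-- `∫₀¹ (1 - t) tʲ dt`. -/
noncomputable def taylorWeight (j : ℕ) : ℝ := ((j : ℝ) + 1)⁻¹ - ((j : ℝ) + 2)⁻¹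

theorem unitIntegral_one_sub_X_mul_C_mul_X_pow (a : A) (j : ℕ) :
    unitIntegral ((1 - X) * (C a * X ^ j)) = taylorWeight j • a := by
  rw [C_mul_X_pow_eq_monomial, sub_mul, one_mul, X_mul_monomial, map_sub,
    unitIntegral_monomial, unitIntegral_monomial, taylorWeight, sub_smul]
  push_cast; ring_nf

theorem unitIntegral_eq_intervalIntegral (q : ℝ[X]) :
    unitIntegral q = ∫ t in (0 : ℝ)..1, q.eval t := by
  induction q using Polynomial.induction_on' with
  | add p q hp hq =>
    rw [map_add, hp, hq, ← intervalIntegral.integral_add (p.continuous.intervalIntegrable _ _)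
      (q.continuous.intervalIntegrable _ _)]
    simp
  | monomial k a =>
    simp [unitIntegral_monomial, integral_pow, div_eq_inv_mul, mul_comm]

theorem unitIntegral_one_sub_X_mul_sum_sq {d : ℕ} (c : Fin d → A) :
    unitIntegral ((1 - X) * (∑ k, C (c k) * X ^ (k : ℕ)) ^ 2) =
      ∑ k : Fin d, ∑ l : Fin d, taylorWeight ((k : ℕ) + l) • (c k * c l) := by
  simp_rw [sq, Finset.sum_mul_sum, Finset.mul_sum, map_sum]
  refine Finset.sum_congr rfl fun k _ => Finset.sum_congr rfl fun l _ => ?_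
  rw [← unitIntegral_one_sub_X_mul_C_mul_X_pow, C_mul, pow_add]
  ring_nf

theorem posSemidef_taylorWeight (d : ℕ) :
    (Matrix.of fun k l : Fin d => taylorWeight ((k : ℕ) + l)).PosSemidef := by
  refine .of_dotProduct_mulVec_nonneg ?_ fun x => ?_
  · ext k l; simp [add_comm]
  · have h := unitIntegral_one_sub_X_mul_sum_sq x
    simp only [smul_eq_mul, unitIntegral_eq_intervalIntegral] at h
    have hquad : star x ⬝ᵥ (Matrix.of fun k l : Fin d => taylorWeight ((k : ℕ) + l)) *ᵥ x =
        ∑ k : Fin d, ∑ l : Fin d, taylorWeight ((k : ℕ) + l) * (x k * x l) := by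
      simp only [dotProduct, mulVec, of_apply, star_trivial, Finset.mul_sum]
      exact Finset.sum_congr rfl fun k _ => Finset.sum_congr rfl fun l _ => by ring
    rw [hquad, ← h]
    refine intervalIntegral.integral_nonneg zero_le_one fun t ht => ?_
    simp only [eval_mul, eval_sub, eval_one, eval_X, eval_pow]
    exact mul_nonneg (by linarith [ht.2]) (sq_nonneg _)

theorem isSumSq_unitIntegral_one_sub_X_mul_sq (Q : A[X]) :
    IsSumSq (unitIntegral ((1 - X) * Q ^ 2)) := by
  set d := Q.natDegree + 1
  have hQ : Q = ∑ k : Fin d, C (Q.coeff k) * X ^ (k : ℕ) := by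
    rw [Fin.sum_univ_eq_sum_range (fun k => C (Q.coeff k) * X ^ k)]
    exact Q.as_sum_range_C_mul_X_pow
  obtain ⟨B, hB⟩ := by
    open scoped MatrixOrder in
    exact CStarAlgebra.nonneg_iff_eq_star_mul_self.mp (posSemidef_taylorWeight d).nonneg
  have hW (k l : Fin d) : taylorWeight ((k : ℕ) + l) = ∑ i, B i k * B i l := by
    simpa [Matrix.mul_apply] using congrFun (congrFun hB k) l
  rw [hQ, unitIntegral_one_sub_X_mul_sum_sq]
  -- `∑ₖₗ wₖ₊ₗ cₖ cₗ = ∑ᵢ (∑ₖ Bᵢₖ cₖ)²` from the Gram factorisation `w = BᵀB`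
  convert IsSumSq.sum_sq Finset.univ fun i => ∑ k, B i k • Q.coeff k using 1
  simp_rw [hW, sq, Finset.sum_mul_sum, Finset.sum_smul, smul_mul_smul_comm]
  exact (Finset.sum_congr rfl fun _ _ => Finset.sum_comm).trans Finset.sum_comm

theorem _root_.IsSumSq.unitIntegral_one_sub_X_mul {q : A[X]} (hq : IsSumSq q) :
    IsSumSq (unitIntegral ((1 - X) * q)) := by
  induction hq with
  | zero => simp
  | sq_add a _ ih =>
    rw [mul_add, map_add, ← sq]
    exact (isSumSq_unitIntegral_one_sub_X_mul_sq a).add ih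

end Polynomial

namespace MvPolynomial

variable {σ R A : Type*} [CommSemiring R] [CommSemiring A] [Algebra R A]

theorem polynomialEval_aeval (v : σ → Polynomial A) (p : MvPolynomial σ R) (s : A) :
    (aeval v p).eval s = aeval (fun i => (v i).eval s) p := by
  simpa using comp_aeval_apply (f := v) ((Polynomial.aeval s).restrictScalars R) p

theorem derivative_aeval [Fintype σ] (v : σ → Polynomial A) (p : MvPolynomial σ R) :
    Polynomial.derivative (aeval v p) =
      ∑ i, aeval v (pderiv i p) * Polynomial.derivative (v i) := by
  classical
  induction p using MvPolynomial.induction_on with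
  | C a => simp
  | add p q hp hq => simp [hp, hq, add_mul, Finset.sum_add_distrib]
  | mul_X p i hp =>
    simp only [map_mul, aeval_X, Polynomial.derivative_mul, hp, Finset.sum_mul,
      Derivation.leibniz, pderiv_X, Pi.single_apply, apply_ite, smul_eq_mul, mul_one, mul_zero,
      map_add, map_zero, add_mul, ite_mul, zero_mul, Finset.sum_add_distrib, Finset.sum_ite_eq,
      Finset.mem_univ, ↓reduceIte]
    rw [add_comm]
    exact congrArg _ (Finset.sum_congr rfl fun _ _ => by ring)

theorem polynomialEval_aeval_line (x d : σ → ℝ) (p : MvPolynomial σ ℝ) (t : ℝ) :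
    (aeval (fun i => Polynomial.C (x i) + Polynomial.C (d i) * Polynomial.X) p).eval t =
      eval (x + t • d) p := by
  have hline : (fun i => (Polynomial.C (x i) + Polynomial.C (d i) * Polynomial.X).eval t) =
      x + t • d := by
    ext i
    simp only [Polynomial.eval_add, Polynomial.eval_C, Polynomial.eval_mul, Polynomial.eval_X,
      Pi.add_apply, Pi.smul_apply, smul_eq_mul, add_right_inj]
    ring
  rw [polynomialEval_aeval, hline, aeval_eq_eval]

theorem eval_pderiv_eq_zero_of_forall_eval_le [Fintype σ] {p : MvPolynomial σ ℝ} {u : σ → ℝ}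
    (hu : ∀ x, eval u p ≤ eval x p) (i : σ) : eval u (pderiv i p) = 0 := by
  classical
  have hmin : IsLocalMin (fun t => (aeval (fun j => Polynomial.C (u j) +
      Polynomial.C ((Pi.single i 1 : σ → ℝ) j) * Polynomial.X) p).eval t) 0 :=
    .of_forall fun t => by simpa [polynomialEval_aeval_line] using hu _
  have h := hmin.deriv_eq_zero
  rw [Polynomial.deriv, derivative_aeval, Polynomial.eval_finsetSum] at h
  simp only [Polynomial.derivative_add, Polynomial.derivative_C, Polynomial.derivative_C_mul_X,
    zero_add, Polynomial.eval_mul, Polynomial.eval_C, polynomialEval_aeval_line, zero_smul,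
    add_zero] at h
  simpa [Pi.single_apply] using h

end MvPolynomial

theorem convexOn_univ_eval_of_isSumSq_derivative_derivative {φ : Polynomial ℝ}
    (h : IsSumSq (Polynomial.derivative (Polynomial.derivative φ))) :
    ConvexOn ℝ Set.univ fun t => φ.eval t := by
  have hderiv (q : Polynomial ℝ) :
      deriv (fun t => q.eval t) = fun t => (Polynomial.derivative q).eval t :=
    funext fun _ => q.deriv
  refine convexOn_univ_of_deriv2_nonneg φ.differentiable ?_ fun t => ?_
  · rw [hderiv]; exact (Polynomial.derivative φ).differentiable
  · simpa [hderiv] using (h.map (Polynomial.evalRingHom t)).nonneg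

section SOSConvex

variable {n : ℕ} {p q : MvPolynomial (Fin n) ℝ}

theorem isSOSConvex_iff_exists_pderiv_pderiv_eq_sum :
    IsSOSConvex p ↔ ∃ (s : ℕ) (L : Matrix (Fin n) (Fin s) (MvPolynomial (Fin n) ℝ)),
      ∀ i j, pderiv i (pderiv j p) = ∑ k, L i k * L j k := by
  simp only [IsSOSConvex, ← Matrix.ext_iff, of_apply, mul_apply, transpose_apply]

theorem isSOSConvex_zero : IsSOSConvex (0 : MvPolynomial (Fin n) ℝ) :=
  isSOSConvex_iff_exists_pderiv_pderiv_eq_sum.2 ⟨0, 0, by simp⟩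

theorem IsSOSConvex.add (hp : IsSOSConvex p) (hq : IsSOSConvex q) : IsSOSConvex (p + q) := by
  rw [isSOSConvex_iff_exists_pderiv_pderiv_eq_sum] at *
  obtain ⟨s, L, hL⟩ := hp
  obtain ⟨t, M, hM⟩ := hq
  exact ⟨s + t, fun i => Fin.append (L i) (M i), fun i j => by simp [Fin.sum_univ_add, hL, hM]⟩

theorem IsSOSConvex.C_mul (hp : IsSOSConvex p) {c : ℝ} (hc : 0 ≤ c) : IsSOSConvex (C c * p) := by
  rw [isSOSConvex_iff_exists_pderiv_pderiv_eq_sum] at *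
  obtain ⟨s, L, hL⟩ := hp
  refine ⟨s, √c • L, fun i j => ?_⟩
  rw [C_mul', Derivation.map_smul, Derivation.map_smul, hL, Finset.smul_sum]
  simp only [Matrix.smul_apply, smul_mul_smul_comm, Real.mul_self_sqrt hc]

theorem IsSOSConvex.sub_C (hp : IsSOSConvex p) (c : ℝ) : IsSOSConvex (p - C c) := by
  simpa [IsSOSConvex] using hp

theorem IsSOSConvex.isSumSq_derivative_derivative_aeval {A : Type*} [CommRing A] [Algebra ℝ A]
    (hp : IsSOSConvex p) (v : Fin n → Polynomial A) (d : Fin n → A)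
    (hv : ∀ i, Polynomial.derivative (v i) = Polynomial.C (d i)) :
    IsSumSq (Polynomial.derivative (Polynomial.derivative (aeval v p))) := by
  obtain ⟨s, L, hL⟩ := isSOSConvex_iff_exists_pderiv_pderiv_eq_sum.1 hp
  suffices h : Polynomial.derivative (Polynomial.derivative (aeval v p)) =
      ∑ k, (∑ i, aeval v (L i k) * Polynomial.C (d i)) ^ 2 from h ▸ IsSumSq.sum_sq _ _
  simp only [derivative_aeval, hv, Polynomial.derivative_mul, Polynomial.derivative_C, mul_zero,
    add_zero, Finset.sum_mul, hL, map_sum, map_mul]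
  simp only [sq, Finset.sum_mul_sum]
  refine Eq.symm <| Finset.sum_comm.trans <| Finset.sum_congr rfl fun i _ =>
    Finset.sum_comm.trans <| Finset.sum_congr rfl fun j _ => Finset.sum_congr rfl fun k _ => by ring

theorem IsSOSConvex.convexOn (hp : IsSOSConvex p) : ConvexOn ℝ Set.univ fun x => eval x p := by
  refine ⟨convex_univ, fun x _ y _ a b ha hb hab => ?_⟩
  have hline := convexOn_univ_eval_of_isSumSq_derivative_derivative
    (hp.isSumSq_derivative_derivative_aeval
      (fun i => Polynomial.C (x i) + Polynomial.C ((y - x) i) * Polynomial.X) (y - x) (by simp))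
  have := hline.2 (Set.mem_univ 0) (Set.mem_univ 1) ha hb hab
  have hmid : x + (a • (0 : ℝ) + b • 1) • (y - x) = a • x + b • y := by
    ext i
    simp only [eq_sub_of_add_eq hab, smul_eq_mul, mul_zero, mul_one, zero_add, Pi.add_apply,
      Pi.smul_apply, Pi.sub_apply]
    ring
  simp only [polynomialEval_aeval_line, hmid] at this
  simpa using this

theorem concaveOn_eval_of_isSOSConvex_neg (hp : IsSOSConvex (-p)) :
    ConcaveOn ℝ Set.univ fun x => eval x p := by
  have := hp.convexOn
  simp only [map_neg] at this
  exact neg_convexOn_iff.1 this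

theorem IsSOSConvex.isSumSq_of_eval_eq_zero (hp : IsSOSConvex p) (hnonneg : ∀ x, 0 ≤ eval x p)
    {u : Fin n → ℝ} (hu : eval u p = 0) : IsSumSq p := by
  have hgrad := eval_pderiv_eq_zero_of_forall_eval_le (p := p) fun x => hu ▸ hnonneg x
  -- the segment `t ↦ u + t (X - u)` from `u` to the generic point `X`
  set v : Fin n → Polynomial (MvPolynomial (Fin n) ℝ) :=
    fun i => Polynomial.C (C (u i)) + Polynomial.C (X i - C (u i)) * Polynomial.X
  have hv (i : Fin n) : Polynomial.derivative (v i) = Polynomial.C (X i - C (u i)) := by simp [v]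
  have heval0 (q : MvPolynomial (Fin n) ℝ) : (aeval v q).eval 0 = C (eval u q) := by
    simpa [polynomialEval_aeval, v] using
      (comp_aeval_apply (f := u) (Algebra.ofId ℝ (MvPolynomial (Fin n) ℝ)) q).symm
  have heval1 : (aeval v p).eval 1 = p := by
    rw [polynomialEval_aeval]
    simp [v]
  have hslope : (Polynomial.derivative (aeval v p)).eval 0 = 0 := by
    simp [derivative_aeval, hv, Polynomial.eval_finsetSum, heval0, hgrad]
  have htaylor := Polynomial.unitIntegral_one_sub_X_mul_derivative_derivative (aeval v p)
  rw [heval1, heval0, hu, hslope, map_zero, sub_zero, sub_zero] at htaylor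
  rw [← htaylor]
  exact (hp.isSumSq_derivative_derivative_aeval v _ hv).unitIntegral_one_sub_X_mul

end SOSConvex

section Lagrange

variable {E ι : Type*} [AddCommGroup E] [Module ℝ E] [Fintype ι] {s : Set E} {F : E → ℝ}
  {G : ι → E → ℝ} {c : ℝ}

theorem exists_fritzJohn_functional (hF : ConvexOn ℝ s F) (hG : ∀ j, ConcaveOn ℝ s (G j))
    (hs : s.Nonempty) (hmin : ∀ x ∈ s, (∀ j, 0 ≤ G j x) → c ≤ F x) :
    ∃ φ : ((ι → ℝ) × ℝ) →L[ℝ] ℝ, φ ≠ 0 ∧ (∀ w, 0 ≤ w → φ w ≤ 0) ∧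
      ∀ x ∈ s, 0 ≤ φ (fun j => G j x, c - F x) := by
  let O : Set ((ι → ℝ) × ℝ) := (Set.univ.pi fun _ => Set.Ioi 0) ×ˢ Set.Ioi 0
  let C : Set ((ι → ℝ) × ℝ) := {p | ∃ x ∈ s, (∀ j, p.1 j ≤ G j x) ∧ p.2 ≤ c - F x}
  have hO : IsOpen O := (isOpen_set_pi Set.finite_univ fun _ _ => isOpen_Ioi).prod isOpen_Ioi
  have hOconv : Convex ℝ O := (convex_pi fun _ _ => convex_Ioi 0).prod (convex_Ioi 0)
  have hCconv : Convex ℝ C := by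
    rintro p ⟨x, hx, hpG, hpF⟩ q ⟨y, hy, hqG, hqF⟩ a b ha hb hab
    refine ⟨a • x + b • y, hF.1 hx hy ha hb hab, fun j => ?_, ?_⟩
    · calc (a • p + b • q).1 j = a * p.1 j + b * q.1 j := rfl
        _ ≤ a * G j x + b * G j y := by gcongr; exacts [hpG j, hqG j]
        _ ≤ G j (a • x + b • y) := (hG j).2 hx hy ha hb hab
    · calc (a • p + b • q).2 = a * p.2 + b * q.2 := rfl
        _ ≤ a * (c - F x) + b * (c - F y) := by gcongr
        _ = c - (a * F x + b * F y) := by linear_combination c * hab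
        _ ≤ c - F (a • x + b • y) := by gcongr; exact hF.2 hx hy ha hb hab
  have hdisj : Disjoint O C := by
    refine Set.disjoint_left.2 fun p ⟨hp1, hp2⟩ ⟨x, hx, hpG, hpF⟩ => ?_
    have := hmin x hx fun j => (hp1 j trivial).le.trans (hpG j)
    simp only [Set.mem_Ioi] at hp2
    linarith
  obtain ⟨φ, u, hφO, hφC⟩ := geometric_hahn_banach_open hOconv hO hCconv hdisj
  have hφN (w : (ι → ℝ) × ℝ) (hw : 0 ≤ w) : φ w ≤ u := by
    have hwO : w ∈ closure O := by
      simpa [O, closure_prod_eq, closure_pi_set, Prod.le_def, Pi.le_def] using hw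
    exact closure_lt_subset_le φ.continuous continuous_const (closure_mono hφO hwO)
  have hu : 0 ≤ u := by simpa using hφN 0 le_rfl
  refine ⟨φ, ?_, fun w hw => ?_, fun x hx =>
    hu.trans (hφC (fun j => G j x, c - F x) ⟨x, hx, fun j => le_rfl, le_rfl⟩)⟩
  · rintro rfl
    obtain ⟨x, hx⟩ := hs
    have h1 := hφO (1, 1) (by simp [O])
    have h2 := hφC (fun j => G j x, c - F x) ⟨x, hx, fun j => le_rfl, le_rfl⟩
    simp only [_root_.zero_apply] at h1 h2
    linarith
  · -- `φ ≤ u` on the cone `0 ≤ w` forces `φ ≤ 0` there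
    by_contra! h
    have := hφN (((u + 1) / φ w) • w) (smul_nonneg (by positivity) hw)
    rw [φ.map_smul, smul_eq_mul, div_mul_cancel₀ _ h.ne'] at this
    linarith

theorem exists_lagrange_multipliers (hF : ConvexOn ℝ s F) (hG : ∀ j, ConcaveOn ℝ s (G j))
    (hslater : ∃ x₀ ∈ s, ∀ j, 0 < G j x₀) (hmin : ∀ x ∈ s, (∀ j, 0 ≤ G j x) → c ≤ F x) :
    ∃ lam : ι → ℝ, (∀ j, 0 ≤ lam j) ∧ ∀ x ∈ s, c + ∑ j, lam j * G j x ≤ F x := by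
  classical
  obtain ⟨x₀, hx₀, hslater⟩ := hslater
  obtain ⟨φ, hφ, hφN, hφs⟩ := exists_fritzJohn_functional hF hG ⟨x₀, hx₀⟩ hmin
  obtain ⟨a, b, hφ_apply⟩ : ∃ (a : ι → ℝ) (b : ℝ), ∀ v r, φ (v, r) = -(∑ j, v j * a j + r * b) := by
    refine ⟨fun j => -φ (Pi.single j 1, 0), -φ (0, 1), fun v r => ?_⟩
    have : (v, r) = ∑ j, v j • ((Pi.single j 1 : ι → ℝ), (0 : ℝ)) + r • (0, 1) := by
      ext <;> simp [Prod.fst_sum, Prod.snd_sum, Finset.sum_apply, Pi.single_apply]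
    rw [this, map_add, map_sum]
    simp only [map_smul, smul_eq_mul, mul_neg, Finset.sum_neg_distrib]
    ring
  have ha (j : ι) : 0 ≤ a j := by
    simpa [hφ_apply, Pi.single_apply] using
      hφN (Pi.single j 1, 0) (by simp [Prod.le_def, Pi.single_nonneg])
  have hb : 0 ≤ b := by simpa [hφ_apply] using hφN (0, 1) (by simp [Prod.le_def])
  have hab (x : E) (hx : x ∈ s) : ∑ j, a j * G j x ≤ b * (F x - c) := by
    have := hφs x hx
    rw [hφ_apply] at this
    simp only [mul_comm (G _ x)] at this
    linarith
  -- by Slater's condition, `b = 0` would force `a = 0`, i.e. `φ = 0`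
  have hb_pos : 0 < b := by
    refine hb.lt_of_ne fun hb0 => hφ ?_
    have h := hab x₀ hx₀
    rw [← hb0, zero_mul] at h
    have hterm (j : ι) : 0 ≤ a j * G j x₀ := mul_nonneg (ha j) (hslater j).le
    have ha0 (j : ι) : a j = 0 := by
      have := (Finset.sum_eq_zero_iff_of_nonneg fun j _ => hterm j).1
        (h.antisymm (Finset.sum_nonneg fun j _ => hterm j)) j (Finset.mem_univ j)
      exact (mul_eq_zero.1 this).resolve_right (hslater j).ne'
    refine ContinuousLinearMap.ext fun p => ?_
    simp [hφ_apply, ha0, ← hb0]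
  refine ⟨fun j => a j / b, fun j => div_nonneg (ha j) hb, fun x hx => ?_⟩
  simp only [← le_sub_iff_add_le', div_mul_eq_mul_div, ← Finset.sum_div]
  rw [div_le_iff₀' hb_pos]
  exact hab x hx

end Lagrange

/-- if Slater's condition holds, `f` attains its infimum `f*` on `K` at some
`x* ∈ K`, `f` is SOS-convex and each `−gⱼ` is SOS-convex, then
`f − f* = σ₀ + Σⱼ λⱼ gⱼ` for some convex SOS `σ₀` and scalars `λⱼ ≥ 0`. -/
theorem stmt_9 (n m : ℕ) (g : Fin m → MvPolynomial (Fin n) ℝ)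
    (K : Set (Fin n → ℝ)) (hK : K = {x | ∀ j, 0 ≤ eval x (g j)})
    (slater : ∃ x₀ : Fin n → ℝ, ∀ j, 0 < eval x₀ (g j))
    (f : MvPolynomial (Fin n) ℝ) (hf : IsSOSConvex f)
    (hg : ∀ j, IsSOSConvex (-(g j)))
    (fstar : ℝ) (xstar : Fin n → ℝ) (hxK : xstar ∈ K)
    (hfx : eval xstar f = fstar) (hmin : ∀ x ∈ K, fstar ≤ eval x f) :
    ∃ (σ₀ : MvPolynomial (Fin n) ℝ) (lam : Fin m → ℝ),
      IsSOS σ₀ ∧ (ConvexOn ℝ Set.univ fun x => eval x σ₀) ∧ (∀ j, 0 ≤ lam j) ∧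
      f - C fstar = σ₀ + ∑ j, C (lam j) * g j := by
  subst hK
  obtain ⟨x₀, hx₀⟩ := slater
  obtain ⟨lam, hlam, hlagrange⟩ := exists_lagrange_multipliers hf.convexOn
    (fun j => concaveOn_eval_of_isSOSConvex_neg (hg j))
    ⟨x₀, Set.mem_univ _, hx₀⟩ fun x _ hx => hmin x hx
  set σ₀ := f - C fstar - ∑ j, C (lam j) * g j with hσ₀
  have heval (x : Fin n → ℝ) : eval x σ₀ = eval x f - fstar - ∑ j, lam j * eval x (g j) := by
    simp [σ₀]
  have hσ₀_nonneg (x : Fin n → ℝ) : 0 ≤ eval x σ₀ := by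
    linarith [heval x, hlagrange x (Set.mem_univ x)]
  have hσ₀_zero : eval xstar σ₀ = 0 := by
    refine le_antisymm ?_ (hσ₀_nonneg xstar)
    rw [heval, hfx, sub_self, zero_sub, neg_nonpos]
    exact Finset.sum_nonneg fun j _ => mul_nonneg (hlam j) (hxK j)
  have hσ₀_sosConvex : IsSOSConvex σ₀ := by
    have : σ₀ = f - C fstar + ∑ j, C (lam j) * -g j := by simp [σ₀, sub_eq_add_neg]
    rw [this]
    exact (hf.sub_C fstar).add <| Finset.sum_induction _ IsSOSConvex
      (fun _ _ => IsSOSConvex.add) isSOSConvex_zero fun j _ => (hg j).C_mul (hlam j)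
  exact ⟨σ₀, lam, (hσ₀_sosConvex.isSumSq_of_eval_eq_zero hσ₀_nonneg hσ₀_zero).isSOS,
    hσ₀_sosConvex.convexOn, hlam, by rw [hσ₀]; ring⟩
end

section
/- Let g₁,…,gₘ ∈ ℝ[X₁,…,Xₙ], K := {x ∈ ℝⁿ : gⱼ(x) ≥ 0, j = 1,…,m} be compact with each gⱼ concave, and assume Slater's condition holds. Set d := maxⱼ ⌈deg gⱼ/2⌉. Suppose that for every polynomial f of degree at most 1 there exist λ ∈ ℝ₊ᵐ such that the Lagrangian f − f* − Σⱼ λⱼ gⱼ is an SOS polynomial, where f* := min{f(x) : x ∈ K}. Then K = {x ∈ ℝⁿ : there exists a linear functional L on the polynomials of degree at most 2d with L(1) = 1, L(Xᵢ) = xᵢ for i = 1,…,n, L(σ) ≥ 0 for every SOS polynomial σ of degree at most 2d, and L(gⱼ) ≥ 0 for all j}. -/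
open MvPolynomial

/-- A polynomial is SOS of degree at most `2d` if it is a finite sum of squares of
polynomials, each of degree at most `d`. -/
def IsSOSUpTo {n : ℕ} (d : ℕ) (p : MvPolynomial (Fin n) ℝ) : Prop :=
  ∃ (k : ℕ) (q : Fin k → MvPolynomial (Fin n) ℝ),
    (∀ i, (q i).totalDegree ≤ d) ∧ p = ∑ i, q i ^ 2

/-! If `x ∉ K`, separate `x` from the closed convex set `K` (the `gⱼ` are concave) by an affine
`f` with `f(x) < u ≤ f* := inf_K f`; Slater's point makes `K` nonempty, so `f*` is a genuine
infimum. The Lagrangian `f - f* - ∑ⱼ λⱼ gⱼ` is SOS of degree at most `2d + 1`, hence a sum of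
squares of polynomials of degree `≤ d`. A pseudo-moment functional `L` at `x` is nonnegative on
it, but `L` agrees with evaluation at `x` on affine polynomials, so
`L(f - f* - ∑ⱼ λⱼ gⱼ) ≤ f(x) - f* < 0`. -/

theorem Finsupp.degree_eq_one_iff {σ : Type*} {s : σ →₀ ℕ} :
    s.degree = 1 ↔ ∃ i, s = Finsupp.single i 1 := by
  classical
  refine ⟨fun h => ?_, fun ⟨i, hi⟩ => hi ▸ Finsupp.degree_single i 1⟩
  obtain ⟨i, hi⟩ := Multiset.card_eq_one.mp (s.card_toMultiset.trans h)
  exact ⟨i, by rw [← s.toMultiset_toFinsupp, hi, Multiset.toFinsupp_singleton]⟩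

namespace MvPolynomial

open MonomialOrder

/-- The leading coefficients of the squares are positive at the `degLex`-largest leading
monomial, so they do not cancel there. -/
theorem two_mul_totalDegree_le_totalDegree_sum_sq
    {σ R ι : Type*} [CommRing R] [LinearOrder R] [IsStrictOrderedRing R]
    {s : Finset ι} (q : ι → MvPolynomial σ R) {i : ι} (hi : i ∈ s) :
    2 * (q i).totalDegree ≤ (∑ j ∈ s, q j ^ 2).totalDegree := by
  obtain ⟨_, _⟩ := exists_wellFoundedGT σ
  obtain ⟨k, hks, hk⟩ :=
    s.exists_max_image (fun j => degLex.toSyn (degLex.degree (q j))) ⟨i, hi⟩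
  have hik : (q i).totalDegree ≤ (q k).totalDegree := degLex_totalDegree_monotone (hk i hi)
  rcases eq_or_ne (q k) 0 with hqk | hqk
  · simp_all
  set δ := degLex.degree (q k)
  have hcoeff_nonneg : ∀ j ∈ s, 0 ≤ (q j ^ 2).coeff (2 • δ) := by
    intro j hj
    rcases (hk j hj).lt_or_eq with hlt | heq
    · rw [degLex.coeff_eq_zero_of_lt]
      calc degLex.toSyn (degLex.degree (q j ^ 2)) ≤ degLex.toSyn (2 • degLex.degree (q j)) :=
            degLex.degree_pow_le 2
        _ < degLex.toSyn (2 • δ) := by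
          simp only [map_nsmul]
          exact nsmul_lt_nsmul_right two_ne_zero hlt
    · rw [← degLex.toSyn.injective heq, coeff_pow_nsmul_degree]
      exact sq_nonneg _
  have hcoeff_pos : 0 < (∑ j ∈ s, q j ^ 2).coeff (2 • δ) := by
    rw [coeff_sum]
    refine Finset.sum_pos' hcoeff_nonneg ⟨k, hks, ?_⟩
    rw [coeff_pow_nsmul_degree]
    exact pow_two_pos_of_ne_zero (degLex.leadingCoeff_ne_zero_iff.mpr hqk)
  calc 2 * (q i).totalDegree ≤ 2 * (q k).totalDegree := by omega
    _ = (2 • δ).degree := by rw [map_nsmul, degree_degLexDegree, smul_eq_mul]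
    _ ≤ _ := le_totalDegree (mem_support_iff.mpr hcoeff_pos.ne')

theorem linearMap_eq_eval_of_totalDegree_le_one {σ R : Type*} [CommRing R]
    (L : MvPolynomial σ R →ₗ[R] R) (x : σ → R) (h1 : L 1 = 1) (hX : ∀ i, L (X i) = x i)
    {f : MvPolynomial σ R} (hf : f.totalDegree ≤ 1) : L f = eval x f := by
  rw [f.as_sum, map_sum, map_sum]
  refine Finset.sum_congr rfl fun s hs => ?_
  rcases Nat.le_one_iff_eq_zero_or_eq_one.mp ((le_totalDegree hs).trans hf) with h0 | h1'
  · rw [(Finsupp.degree_eq_zero_iff s).mp h0, monomial_zero', C_eq_smul_one, map_smul, h1]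
    simp
  · obtain ⟨i, rfl⟩ := Finsupp.degree_eq_one_iff.mp h1'
    rw [← C_mul_X_eq_monomial, ← smul_eq_C_mul, map_smul, hX]
    simp

theorem exists_totalDegree_le_one_eval_eq {σ R : Type*} [Fintype σ] [CommRing R]
    (ℓ : (σ → R) →ₗ[R] R) :
    ∃ f : MvPolynomial σ R, f.totalDegree ≤ 1 ∧ ∀ y, eval y f = ℓ y := by
  classical
  refine ⟨∑ i, C (ℓ fun j => if i = j then 1 else 0) * X i, ?_, fun y => ?_⟩
  · refine (totalDegree_finsetSum _ _).trans (Finset.sup_le fun i _ => ?_)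
    rw [C_mul_X_eq_monomial]
    exact (totalDegree_monomial_le _ _).trans (by simp)
  · simp [LinearMap.pi_apply_eq_sum_univ ℓ y, mul_comm]

theorem exists_totalDegree_le_one_separating {σ : Type*} [Fintype σ] {K : Set (σ → ℝ)}
    (hconv : Convex ℝ K) (hclosed : IsClosed K) {x : σ → ℝ} (hx : x ∉ K) :
    ∃ f : MvPolynomial σ ℝ, f.totalDegree ≤ 1 ∧ ∃ u, eval x f < u ∧ ∀ y ∈ K, u < eval y f := by
  obtain ⟨ℓ, u, hK, hxu⟩ := geometric_hahn_banach_closed_point hconv hclosed hx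
  obtain ⟨f, hf, hfℓ⟩ := exists_totalDegree_le_one_eval_eq (-(ℓ : (σ → ℝ) →ₗ[ℝ] ℝ))
  refine ⟨f, hf, -u, ?_, fun y hy => ?_⟩
  · simpa [hfℓ] using hxu
  · simpa [hfℓ] using hK y hy

theorem totalDegree_sub_C_sub_sum_C_mul_le {σ R ι : Type*} [CommRing R] [Fintype ι]
    {f : MvPolynomial σ R} {g : ι → MvPolynomial σ R} {N : ℕ} (hf : f.totalDegree ≤ N)
    (hg : ∀ j, (g j).totalDegree ≤ N) (c : R) (lam : ι → R) :
    (f - C c - ∑ j, C (lam j) * g j).totalDegree ≤ N := by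
  refine (totalDegree_sub _ _).trans (max_le ((totalDegree_sub_C_le _ _).trans hf) ?_)
  refine (totalDegree_finsetSum _ _).trans (Finset.sup_le fun j _ => ?_)
  exact (totalDegree_mul _ _).trans (by simpa using hg j)

end MvPolynomial

theorem IsSOS.isSOSUpTo {n d : ℕ} {p : MvPolynomial (Fin n) ℝ} (hp : IsSOS p)
    (hdeg : p.totalDegree ≤ 2 * d + 1) : IsSOSUpTo d p := by
  obtain ⟨k, q, rfl⟩ := hp
  refine ⟨k, q, fun i => ?_, rfl⟩
  have := (two_mul_totalDegree_le_totalDegree_sum_sq q (Finset.mem_univ i)).trans hdeg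
  omega

theorem IsSOSUpTo.eval_nonneg {n d : ℕ} {p : MvPolynomial (Fin n) ℝ} (hp : IsSOSUpTo d p)
    (x : Fin n → ℝ) : 0 ≤ eval x p := by
  obtain ⟨k, q, -, rfl⟩ := hp
  simp only [map_sum, map_pow]
  positivity

theorem convex_setOf_forall_nonneg {ι E : Type*} [AddCommGroup E] [Module ℝ E]
    {g : ι → E → ℝ} (hg : ∀ j, ConcaveOn ℝ Set.univ (g j)) :
    Convex ℝ {x | ∀ j, 0 ≤ g j x} := by
  simpa only [Set.ofPred_forall, Set.mem_univ, true_and] using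
    convex_iInter fun j => (hg j).convex_ge 0

theorem stmt_12_general (n m : ℕ) (g : Fin m → MvPolynomial (Fin n) ℝ)
    (K : Set (Fin n → ℝ)) (hK : K = {x | ∀ j, 0 ≤ eval x (g j)})
    (hconc : ∀ j, ConcaveOn ℝ Set.univ fun x => eval x (g j))
    (slater : ∃ x₀ : Fin n → ℝ, ∀ j, 0 < eval x₀ (g j))
    (d : ℕ) (hd : d = Finset.univ.sup fun j => ((g j).totalDegree + 1) / 2)
    (hlag : ∀ f : MvPolynomial (Fin n) ℝ, f.totalDegree ≤ 1 →
      ∃ lam : Fin m → ℝ, (∀ j, 0 ≤ lam j) ∧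
        IsSOS (f - C (sInf ((fun x => eval x f) '' K)) - ∑ j, C (lam j) * g j)) :
    K = {x | ∃ L : MvPolynomial (Fin n) ℝ →ₗ[ℝ] ℝ,
      L 1 = 1 ∧ (∀ i, L (X i) = x i) ∧
      (∀ σ, IsSOSUpTo d σ → 0 ≤ L σ) ∧ (∀ j, 0 ≤ L (g j))} := by
  obtain ⟨x₀, hx₀⟩ := slater
  have hgdeg : ∀ j, (g j).totalDegree ≤ 2 * d + 1 := fun j => by
    have := hd ▸ Finset.le_sup (f := fun j => ((g j).totalDegree + 1) / 2) (Finset.mem_univ j)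
    omega
  have hKclosed : IsClosed K := by
    simpa only [hK, Set.ofPred_forall] using
      isClosed_iInter fun j => isClosed_le continuous_const (continuous_eval (g j))
  ext x
  refine ⟨fun hx => ⟨(aeval x).toLinearMap, by simp, by simp,
    fun σ hσ => by simpa using hσ.eval_nonneg x, by simpa [hK] using hx⟩, ?_⟩
  rintro ⟨L, hL1, hLX, hLsos, hLg⟩
  by_contra hx
  obtain ⟨f, hf, u, hxu, hKu⟩ :=
    exists_totalDegree_le_one_separating (hK ▸ convex_setOf_forall_nonneg hconc) hKclosed hx
  obtain ⟨lam, hlam, hsos⟩ := hlag f hf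
  have hu : u ≤ sInf ((fun y => eval y f) '' K) :=
    le_csInf ⟨_, x₀, hK ▸ fun j => (hx₀ j).le, rfl⟩ (by rintro _ ⟨y, hy, rfl⟩; exact (hKu y hy).le)
  have hLlag := hLsos _ <| hsos.isSOSUpTo <|
    totalDegree_sub_C_sub_sum_C_mul_le (hf.trans (by omega)) hgdeg _ lam
  have hLsum : 0 ≤ L (∑ j, C (lam j) * g j) := by
    simp only [← smul_eq_C_mul, map_sum, map_smul, smul_eq_mul]
    exact Finset.sum_nonneg fun j _ => mul_nonneg (hlam j) (hLg j)
  rw [map_sub, map_sub, linearMap_eq_eval_of_totalDegree_le_one L x hL1 hLX hf,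
    linearMap_eq_eval_of_totalDegree_le_one L x hL1 hLX
      ((totalDegree_C _).trans_le zero_le_one), eval_C] at hLlag
  linarith

/-- if `K` is compact with concave defining polynomials `gⱼ`, Slater's
condition holds, `d = maxⱼ ⌈deg gⱼ/2⌉`, and for every polynomial `f` of degree at most 1
the Lagrangian `f − f* − Σⱼ λⱼ gⱼ` is SOS for some `λ ≥ 0` (with `f* := min_K f`), then
`K` equals the projection of the moment-based semidefinite set. -/
theorem stmt_12 (n m : ℕ) (g : Fin m → MvPolynomial (Fin n) ℝ)
    (K : Set (Fin n → ℝ)) (hK : K = {x | ∀ j, 0 ≤ eval x (g j)})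
    (hcompact : IsCompact K)
    (hconc : ∀ j, ConcaveOn ℝ Set.univ fun x => eval x (g j))
    (slater : ∃ x₀ : Fin n → ℝ, ∀ j, 0 < eval x₀ (g j))
    (d : ℕ) (hd : d = Finset.univ.sup fun j => ((g j).totalDegree + 1) / 2)
    (hlag : ∀ f : MvPolynomial (Fin n) ℝ, f.totalDegree ≤ 1 →
      ∃ lam : Fin m → ℝ, (∀ j, 0 ≤ lam j) ∧
        IsSOS (f - C (sInf ((fun x => eval x f) '' K)) - ∑ j, C (lam j) * g j)) :
    K = {x | ∃ L : MvPolynomial (Fin n) ℝ →ₗ[ℝ] ℝ,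
      L 1 = 1 ∧ (∀ i, L (X i) = x i) ∧
      (∀ σ, IsSOSUpTo d σ → 0 ≤ L σ) ∧ (∀ j, 0 ≤ L (g j))} :=
  stmt_12_general n m g K hK hconc slater d hd hlag
end
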